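/- The Cramér distance CD(F,G) = ∫_{-∞}^{∞} (F(x) − G(x))^2 dx admits the quantile representation CD(F,G) = 2 ∫_0^1 ∫_0^1 χ(τ,ξ) · |F^{-1}(τ) − G^{-1}(ξ)| dτ dξ, where χ(τ,ξ) = 1 if sgn(τ − ξ) ≠ sgn(F^{-1}(τ) − G^{-1}(ξ)) and 0 otherwise. -/

import Mathlib

open MeasureTheory
open scoped ENNReal Classical

/-- Generalized quantile function (left-inverse of a CDF). -/
noncomputable def quantile (F : ℝ → ℝ) (τ : ℝ) : ℝ := sInf {x | τ ≤ F x}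

/-!
Write `|a - b|` as the length of `Ici a ∆ Ici b` and apply Tonelli: the right-hand side becomes
the integral over `x` of twice the area of the set of `(ξ, τ) ∈ (0,1)²` with `χ(τ, ξ) = 1` and
`x ∈ Ici F⁻¹(τ) ∆ Ici G⁻¹(ξ)`. By the Galois connection `F⁻¹(τ) ≤ x ↔ τ ≤ F x`, this set is the
triangle `G x < ξ ≤ τ ≤ F x` (or its mirror image when `F x < G x`), of area `(F x - G x)² / 2`.
-/

open Set Filter Topology
open scoped symmDiff

theorem volume_Ici_symmDiff_Ici (u v : ℝ) : volume (Ici u ∆ Ici v) = ENNReal.ofReal |u - v| := by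
  wlog h : u ≤ v generalizing u v
  · rw [symmDiff_comm, abs_sub_comm]
    exact this v u (le_of_not_ge h)
  rw [symmDiff_of_ge (Ici_subset_Ici.2 h), Ici_sdiff_Ici, Real.volume_Ico, abs_sub_comm,
    abs_of_nonneg (sub_nonneg.2 h)]

theorem quantile_le_iff {F : ℝ → ℝ} (hF : Monotone F)
    (hFrc : ∀ x, ContinuousWithinAt F (Ici x) x) {τ : ℝ}
    (hlo : ∃ y, F y < τ) (hhi : ∃ y, τ ≤ F y) (x : ℝ) :
    quantile F τ ≤ x ↔ τ ≤ F x := by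
  obtain ⟨y₀, hy₀⟩ := hlo
  have hbdd : BddBelow {y | τ ≤ F y} :=
    ⟨y₀, fun y hy => le_of_lt (hF.reflect_lt (hy₀.trans_le hy))⟩
  have hmem : τ ≤ F (quantile F τ) := by
    refine ge_of_tendsto ((hFrc _).mono_left (nhdsWithin_mono _ Ioi_subset_Ici_self))
      (eventually_nhdsWithin_of_forall fun y hy => ?_)
    obtain ⟨s, hs, hsy⟩ := (csInf_lt_iff hbdd hhi).mp hy
    exact hs.trans (hF hsy.le)
  exact ⟨fun h => hmem.trans (hF h), fun h => csInf_le hbdd h⟩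

theorem quantile_le_iff_of_tendsto {F : ℝ → ℝ} (hF : Monotone F)
    (hFrc : ∀ x, ContinuousWithinAt F (Ici x) x)
    (hF0 : Tendsto F atBot (𝓝 0)) (hF1 : Tendsto F atTop (𝓝 1))
    {τ : ℝ} (hτ : τ ∈ Ioo 0 1) (x : ℝ) :
    quantile F τ ≤ x ↔ τ ≤ F x :=
  quantile_le_iff hF hFrc (hF0.eventually (eventually_lt_nhds hτ.1)).exists
    ((hF1.eventually (eventually_gt_nhds hτ.2)).exists.imp fun _ => le_of_lt) x

def diagonalTriangle (g f : ℝ) : Set (ℝ × ℝ) :=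
  {p | g < p.1 ∧ p.1 ≤ p.2 ∧ p.2 ≤ f} ∪ {p | f < p.2 ∧ p.2 ≤ p.1 ∧ p.1 ≤ g}

/-- If `a ≤ x < b` then `a < b`, so the sign condition reads `ξ ≤ τ`, while the two
equivalences turn `a ≤ x < b` into `g < ξ` and `τ ≤ f`. -/
theorem mem_diagonalTriangle_iff {a b f g x ξ τ : ℝ} (ha : a ≤ x ↔ τ ≤ f) (hb : b ≤ x ↔ ξ ≤ g) :
    (ξ, τ) ∈ diagonalTriangle g f ↔
      Real.sign (τ - ξ) ≠ Real.sign (a - b) ∧ x ∈ Ici a ∆ Ici b := by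
  simp only [diagonalTriangle, mem_union, mem_ofPred_eq, mem_symmDiff, mem_Ici, Real.sign]
  split_ifs <;> grind

theorem lintegral_lintegral_triangle {a b : ℝ} (hba : b ≤ a) :
    ∫⁻ ξ, ∫⁻ τ, (if b < ξ ∧ ξ ≤ τ ∧ τ ≤ a then 1 else 0 : ℝ≥0∞) =
      ENNReal.ofReal ((a - b) ^ 2 / 2) := by
  have inner (ξ : ℝ) : ∫⁻ τ, (if b < ξ ∧ ξ ≤ τ ∧ τ ≤ a then 1 else 0 : ℝ≥0∞) =
      (Ioc b a).indicator (fun ξ => ENNReal.ofReal (a - ξ)) ξ := by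
    by_cases hξ : ξ ∈ Ioc b a
    · have : ∀ τ, (if b < ξ ∧ ξ ≤ τ ∧ τ ≤ a then 1 else 0 : ℝ≥0∞) = (Icc ξ a).indicator 1 τ :=
        fun τ => by simp [indicator_apply, hξ.1]
      rw [lintegral_congr this, lintegral_indicator_one measurableSet_Icc, Real.volume_Icc,
        indicator_of_mem hξ]
    · have : ∀ τ, (if b < ξ ∧ ξ ≤ τ ∧ τ ≤ a then 1 else 0 : ℝ≥0∞) = 0 :=
        fun τ => if_neg fun h => hξ ⟨h.1, h.2.1.trans h.2.2⟩
      rw [lintegral_congr this, lintegral_zero, indicator_of_notMem hξ]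
  have hlin : ∫ ξ in b..a, (a - ξ) = (a - b) ^ 2 / 2 := by
    rw [intervalIntegral.integral_sub intervalIntegrable_const
      intervalIntegral.intervalIntegrable_id, intervalIntegral.integral_const, integral_id,
      smul_eq_mul]
    ring
  simp_rw [inner]
  rw [lintegral_indicator measurableSet_Ioc, ← ofReal_integral_eq_lintegral_ofReal,
    ← intervalIntegral.integral_of_le hba, hlin]
  · exact (continuous_const.sub continuous_id).integrableOn_Ioc
  · exact (ae_restrict_iff' measurableSet_Ioc).2 (ae_of_all _ fun ξ hξ => sub_nonneg.2 hξ.2)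

theorem measurable_ite_mem_diagonalTriangle {α : Type*} [MeasurableSpace α] {g f ξ τ : α → ℝ}
    (hg : Measurable g) (hf : Measurable f) (hξ : Measurable ξ) (hτ : Measurable τ) :
    Measurable fun p => if (ξ p, τ p) ∈ diagonalTriangle (g p) (f p) then (1 : ℝ≥0∞) else 0 := by
  refine Measurable.ite ?_ measurable_const measurable_const
  exact ((measurableSet_lt hg hξ).inter
      ((measurableSet_le hξ hτ).inter (measurableSet_le hτ hf))).union
    ((measurableSet_lt hf hτ).inter ((measurableSet_le hτ hξ).inter (measurableSet_le hξ hg)))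

theorem setLIntegral_setLIntegral_Ioo_eq_of_support_subset {a b : ℝ} {h : ℝ → ℝ → ℝ≥0∞}
    (hh : (Function.uncurry h).support ⊆ Icc a b ×ˢ Icc a b) :
    ∫⁻ ξ in Ioo a b, ∫⁻ τ in Ioo a b, h ξ τ = ∫⁻ ξ, ∫⁻ τ, h ξ τ := by
  have inner (ξ : ℝ) : ∫⁻ τ in Ioo a b, h ξ τ = ∫⁻ τ, h ξ τ := by
    rw [setLIntegral_congr Ioo_ae_eq_Icc]
    exact setLIntegral_eq_of_support_subset fun τ hτ => (@hh (ξ, τ) hτ).2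
  simp_rw [inner]
  rw [setLIntegral_congr Ioo_ae_eq_Icc]
  refine setLIntegral_eq_of_support_subset fun ξ hξ => ?_
  obtain ⟨τ, hτ⟩ : ∃ τ, h ξ τ ≠ 0 := by
    by_contra! H
    exact hξ (by simp [H])
  exact (@hh (ξ, τ) hτ).1

theorem setLIntegral_setLIntegral_diagonalTriangle {f g : ℝ} (hf : f ∈ Icc 0 1)
    (hg : g ∈ Icc 0 1) :
    ∫⁻ ξ in Ioo 0 1, ∫⁻ τ in Ioo 0 1,
        (if (ξ, τ) ∈ diagonalTriangle g f then 1 else 0 : ℝ≥0∞) =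
      ENNReal.ofReal ((f - g) ^ 2 / 2) := by
  rw [setLIntegral_setLIntegral_Ioo_eq_of_support_subset]
  swap
  · rintro ⟨ξ, τ⟩ h
    simp only [Function.mem_support, Function.uncurry_apply_pair, ne_eq, ite_eq_right_iff,
      one_ne_zero, imp_false, not_not, diagonalTriangle, mem_union, mem_ofPred_eq] at h
    simp only [mem_prod, mem_Icc]
    grind
  rcases le_total g f with hgf | hfg
  · have h (ξ τ : ℝ) : (if (ξ, τ) ∈ diagonalTriangle g f then 1 else 0 : ℝ≥0∞) =
        if g < ξ ∧ ξ ≤ τ ∧ τ ≤ f then 1 else 0 :=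
      if_congr (by simp only [diagonalTriangle, mem_union, mem_ofPred_eq]; grind) rfl rfl
    simp_rw [h]
    exact lintegral_lintegral_triangle hgf
  · have h (ξ τ : ℝ) : (if (ξ, τ) ∈ diagonalTriangle g f then 1 else 0 : ℝ≥0∞) =
        if f < τ ∧ τ ≤ ξ ∧ ξ ≤ g then 1 else 0 :=
      if_congr (by simp only [diagonalTriangle, mem_union, mem_ofPred_eq]; grind) rfl rfl
    rw [lintegral_lintegral_swap (measurable_ite_mem_diagonalTriangle measurable_const
      measurable_const measurable_fst measurable_snd).aemeasurable]
    simp_rw [h]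
    rw [lintegral_lintegral_triangle hfg, ← neg_sub, neg_sq]

theorem lintegral_ite_mem_diagonalTriangle {F G : ℝ → ℝ} {a b ξ τ : ℝ}
    (ha : ∀ x, a ≤ x ↔ τ ≤ F x) (hb : ∀ x, b ≤ x ↔ ξ ≤ G x) :
    ∫⁻ x, (if (ξ, τ) ∈ diagonalTriangle (G x) (F x) then 1 else 0 : ℝ≥0∞) =
      if Real.sign (τ - ξ) ≠ Real.sign (a - b) then ENNReal.ofReal |a - b| else 0 := by
  simp_rw [mem_diagonalTriangle_iff (ha _) (hb _), ite_and]
  by_cases hχ : Real.sign (τ - ξ) ≠ Real.sign (a - b)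
  · simp only [if_pos hχ]
    rw [← volume_Ici_symmDiff_Ici, ← lintegral_indicator_one
      (measurableSet_Ici.symmDiff measurableSet_Ici)]
    rfl
  · simp only [if_neg hχ, lintegral_zero]

theorem cramer_quantile_representation (F G : ℝ → ℝ)
    (hF : Monotone F) (hG : Monotone G)
    (hFrc : ∀ x, ContinuousWithinAt F (Set.Ici x) x)
    (hGrc : ∀ x, ContinuousWithinAt G (Set.Ici x) x)
    (hF0 : Filter.Tendsto F Filter.atBot (nhds 0))
    (hF1 : Filter.Tendsto F Filter.atTop (nhds 1))
    (hG0 : Filter.Tendsto G Filter.atBot (nhds 0))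
    (hG1 : Filter.Tendsto G Filter.atTop (nhds 1)) :
    (∫⁻ x : ℝ, ENNReal.ofReal ((F x - G x) ^ 2)) =
      2 * ∫⁻ ξ in Set.Ioo (0:ℝ) 1, ∫⁻ τ in Set.Ioo (0:ℝ) 1,
        (if Real.sign (τ - ξ) ≠ Real.sign (quantile F τ - quantile G ξ)
          then ENNReal.ofReal |quantile F τ - quantile G ξ| else 0) := by
  let C (x ξ τ : ℝ) : ℝ≥0∞ := if (ξ, τ) ∈ diagonalTriangle (G x) (F x) then 1 else 0
  have hC {α : Type} [MeasurableSpace α] {x ξ τ : α → ℝ} (hx : Measurable x)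
      (hξ : Measurable ξ) (hτ : Measurable τ) : Measurable fun p => C (x p) (ξ p) (τ p) :=
    measurable_ite_mem_diagonalTriangle (hG.measurable.comp hx) (hF.measurable.comp hx) hξ hτ
  have area (x : ℝ) : ENNReal.ofReal ((F x - G x) ^ 2) =
      2 * ∫⁻ ξ in Ioo 0 1, ∫⁻ τ in Ioo 0 1, C x ξ τ := by
    rw [setLIntegral_setLIntegral_diagonalTriangle
      ⟨hF.le_of_tendsto hF0 x, hF.ge_of_tendsto hF1 x⟩
      ⟨hG.le_of_tendsto hG0 x, hG.ge_of_tendsto hG1 x⟩,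
      ENNReal.ofReal_div_of_pos two_pos, ENNReal.ofReal_ofNat,
      ENNReal.mul_div_cancel two_ne_zero ENNReal.ofNat_ne_top]
  calc ∫⁻ x, ENNReal.ofReal ((F x - G x) ^ 2)
      = 2 * ∫⁻ x, ∫⁻ ξ in Ioo 0 1, ∫⁻ τ in Ioo 0 1, C x ξ τ := by
        simp_rw [area]
        exact lintegral_const_mul' _ _ ENNReal.ofNat_ne_top
    _ = 2 * ∫⁻ ξ in Ioo 0 1, ∫⁻ τ in Ioo 0 1, ∫⁻ x, C x ξ τ := by
        rw [lintegral_lintegral_swap (Measurable.lintegral_prod_right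
          (f := fun (p : ℝ × ℝ) τ => C p.1 p.2 τ) (hC measurable_fst.fst measurable_fst.snd
          measurable_snd)).aemeasurable]
        exact congrArg _ <| lintegral_congr fun ξ => lintegral_lintegral_swap
          (hC (ξ := fun _ => ξ) measurable_fst measurable_const measurable_snd).aemeasurable
    _ = _ := by
        congr 1
        refine setLIntegral_congr_fun measurableSet_Ioo fun ξ hξ =>
          setLIntegral_congr_fun measurableSet_Ioo fun τ hτ => ?_
        exact lintegral_ite_mem_diagonalTriangle
          (quantile_le_iff_of_tendsto hF hFrc hF0 hF1 hτ)
          (quantile_le_iff_of_tendsto hG hGrc hG0 hG1 hξ)
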